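/- Let σ > 0 and ω, c real with 4ω > c², write φ = φ_{ω,c}, and let k₂ be any real constant. Set v = (k₂ − φ^{2σ}/(2σ+2)) φ. Then pointwise on ℝ: L₁₁ φ_y + L₂₁ v = 0 and L₁₂ φ_y + L₂₂ v = 0. Consequently χ₁ = e^{iθ}(φ_y + i v) lies in the kernel of H_φ, where H_φ(e^{iθ}(u₁+iu₂)) = e^{iθ}[(L₁₁u₁ + L₂₁u₂) + i(L₁₂u₁ + L₂₂u₂)]. -/

import Mathlib

open Real MeasureTheory

/-- The solitary wave profile `φ_{ω,c}` for the generalized DNLS equation. -/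
noncomputable def solProfile (σ ω c : ℝ) (y : ℝ) : ℝ :=
  ((σ + 1) * (4 * ω - c ^ 2) /
      (2 * Real.sqrt ω *
        (Real.cosh (σ * Real.sqrt (4 * ω - c ^ 2) * y) - c / (2 * Real.sqrt ω)))) ^
    (1 / (2 * σ))

/-- The traveling phase `θ_{ω,c}`. -/
noncomputable def travPhase (σ ω c : ℝ) (y : ℝ) : ℝ :=
  c / 2 * y - (1 / (2 * σ + 2)) * ∫ η in Set.Iio y, solProfile σ ω c η ^ (2 * σ)

/-- Block operator `L₁₁`. -/
noncomputable def opL11 (σ ω c : ℝ) (u : ℝ → ℝ) (y : ℝ) : ℝ :=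
  -deriv (deriv u) y + (ω - c ^ 2 / 4) * u y
    + (c * (2 * σ + 1) / 2) * solProfile σ ω c y ^ (2 * σ) * u y
    - ((4 * σ ^ 2 + 6 * σ + 1) / (4 * (σ + 1) ^ 2)) * solProfile σ ω c y ^ (4 * σ) * u y

/-- Block operator `L₂₁`. -/
noncomputable def opL21 (σ ω c : ℝ) (u : ℝ → ℝ) (y : ℝ) : ℝ :=
  -(σ / (σ + 1)) * solProfile σ ω c y ^ (2 * σ - 1) * deriv (solProfile σ ω c) y * u y
    + (σ / (σ + 1)) * solProfile σ ω c y ^ (2 * σ) * deriv u y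

/-- Block operator `L₁₂`. -/
noncomputable def opL12 (σ ω c : ℝ) (u : ℝ → ℝ) (y : ℝ) : ℝ :=
  -((2 * σ + 1) * σ / (σ + 1)) * solProfile σ ω c y ^ (2 * σ - 1) * deriv (solProfile σ ω c) y * u y
    - (σ / (σ + 1)) * solProfile σ ω c y ^ (2 * σ) * deriv u y

/-- Block operator `L₂₂`. -/
noncomputable def opL22 (σ ω c : ℝ) (u : ℝ → ℝ) (y : ℝ) : ℝ :=
  -deriv (deriv u) y + (ω - c ^ 2 / 4) * u y
    + (c / 2) * solProfile σ ω c y ^ (2 * σ) * u y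
    - ((2 * σ + 1) / (4 * (σ + 1) ^ 2)) * solProfile σ ω c y ^ (4 * σ) * u y

/-- The linearized operator in dephased variables:
`H_φ (e^{iθ}(u₁+iu₂)) = e^{iθ}[(L₁₁u₁ + L₂₁u₂) + i(L₁₂u₁ + L₂₂u₂)]`. -/
noncomputable def opHde (σ ω c : ℝ) (u₁ u₂ : ℝ → ℝ) (y : ℝ) : ℂ :=
  Complex.exp (Complex.I * (travPhase σ ω c y : ℂ)) *
    (((opL11 σ ω c u₁ y + opL21 σ ω c u₂ y : ℝ) : ℂ)
      + Complex.I * ((opL12 σ ω c u₁ y + opL22 σ ω c u₂ y : ℝ) : ℂ))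

/-! The profile is `φ = (A / (cosh (b y) - d)) ^ r` with `r = 1/(2σ)`, and a direct computation
gives the profile equation `φ'' = N(p) φ`, where `p = φ ^ (2σ) = A / (cosh (b y) - d)` and
`N(p) = ω - c²/4 + (c/2) p - (2σ+1)/(4(σ+1)²) p²`. Differentiating it once more gives `φ'''`.
Since `p' = 2σ p φ'/φ`, the second component `v = (k₂ - p/(2σ+2)) φ` has
`v' = (k₂ - (2σ+1)/(2σ+2) p) φ'`, and both components of `H_φ χ₁` reduce to rational
expressions in `φ, φ', p` that cancel identically. -/

noncomputable def coshProfile (A b d r y : ℝ) : ℝ := (A / (cosh (b * y) - d)) ^ r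

section coshProfile

variable {A b d r : ℝ}

lemma cosh_sub_pos (hd : d < 1) (x : ℝ) : 0 < cosh x - d := by
  linarith [one_le_cosh x]

lemma coshProfile_pos (hA : 0 < A) (hd : d < 1) (y : ℝ) : 0 < coshProfile A b d r y :=
  rpow_pos_of_pos (div_pos hA (cosh_sub_pos hd _)) r

lemma hasDerivAt_cosh_mul_sub (b d y : ℝ) :
    HasDerivAt (fun y => cosh (b * y) - d) (sinh (b * y) * b) y :=
  (((hasDerivAt_id y).const_mul b).cosh.sub_const d).congr_deriv (by simp)

lemma hasDerivAt_coshProfile (hA : 0 < A) (hd : d < 1) (y : ℝ) :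
    HasDerivAt (coshProfile A b d r)
      (-(r * b) * (sinh (b * y) / (cosh (b * y) - d)) * coshProfile A b d r y) y := by
  have hu := cosh_sub_pos hd (b * y)
  have hq : 0 < A / (cosh (b * y) - d) := div_pos hA hu
  refine (((hasDerivAt_const y A).fun_div (hasDerivAt_cosh_mul_sub b d y) hu.ne').rpow_const
    (p := r) (Or.inl hq.ne')).congr_deriv ?_
  rw [coshProfile, rpow_sub_one hq.ne']
  field_simp
  ring

lemma hasDerivAt_deriv_coshProfile (hA : 0 < A) (hd : d < 1) (y : ℝ) :
    HasDerivAt (deriv (coshProfile A b d r))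
      (r * b ^ 2 * (r + (2 * r + 1) * d / (cosh (b * y) - d)
          - (r + 1) * (1 - d ^ 2) / (cosh (b * y) - d) ^ 2) * coshProfile A b d r y) y := by
  have hderiv : deriv (coshProfile A b d r) = fun y =>
      -(r * b) * (sinh (b * y) / (cosh (b * y) - d)) * coshProfile A b d r y :=
    funext fun y => (hasDerivAt_coshProfile hA hd y).deriv
  have hu := cosh_sub_pos hd (b * y)
  have hsinh : HasDerivAt (fun y => sinh (b * y)) (cosh (b * y) * b) y :=
    ((hasDerivAt_id y).const_mul b).sinh.congr_deriv (by simp)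
  rw [hderiv]
  refine (((hsinh.fun_div (hasDerivAt_cosh_mul_sub b d y) hu.ne').const_mul (-(r * b))).mul
    (hasDerivAt_coshProfile hA hd y)).congr_deriv ?_
  field_simp
  linear_combination (r * b ^ 2 * coshProfile A b d r y) * ((1 + r) * sinh_sq (b * y))

end coshProfile

lemma rpow_four_mul_eq_sq {x : ℝ} (hx : 0 ≤ x) (s : ℝ) : x ^ (4 * s) = (x ^ (2 * s)) ^ 2 := by
  rw [← rpow_natCast, ← rpow_mul hx]
  ring_nf

noncomputable def profileCoeff (σ ω c p : ℝ) : ℝ :=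
  ω - c ^ 2 / 4 + c / 2 * p - (2 * σ + 1) / (4 * (σ + 1) ^ 2) * p ^ 2

lemma hasDerivAt_profileCoeff (σ ω c p : ℝ) :
    HasDerivAt (profileCoeff σ ω c) (c / 2 - 2 * ((2 * σ + 1) / (4 * (σ + 1) ^ 2)) * p) p := by
  have := (((hasDerivAt_id p).const_mul (c / 2)).const_add (ω - c ^ 2 / 4)).sub
    ((hasDerivAt_pow 2 p).const_mul ((2 * σ + 1) / (4 * (σ + 1) ^ 2)))
  exact this.congr_deriv (by simp; ring)

noncomputable def chi1Im (σ ω c k₂ y : ℝ) : ℝ :=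
  (k₂ - solProfile σ ω c y ^ (2 * σ) / (2 * σ + 2)) * solProfile σ ω c y

lemma opHde_eq_zero {σ ω c y : ℝ} {u₁ u₂ : ℝ → ℝ}
    (hRe : opL11 σ ω c u₁ y + opL21 σ ω c u₂ y = 0)
    (hIm : opL12 σ ω c u₁ y + opL22 σ ω c u₂ y = 0) : opHde σ ω c u₁ u₂ y = 0 := by
  simp [opHde, hRe, hIm]

section solProfile

variable {σ ω c : ℝ}

local notation "φ" => solProfile σ ω c

lemma solProfile_eq_coshProfile (σ ω c : ℝ) :
    solProfile σ ω c = coshProfile ((σ + 1) * (4 * ω - c ^ 2) / (2 * √ω))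
      (σ * √(4 * ω - c ^ 2)) (c / (2 * √ω)) (1 / (2 * σ)) := by
  funext y
  simp only [solProfile, coshProfile, div_div]

lemma div_two_sqrt_lt_one (h : c ^ 2 < 4 * ω) : c / (2 * √ω) < 1 := by
  have hω : 0 < ω := by nlinarith [sq_nonneg c]
  have hs : 0 < √ω := sqrt_pos.mpr hω
  rw [div_lt_one (by positivity)]
  nlinarith [sq_nonneg (c - 2 * √ω), sq_sqrt hω.le]

lemma solAmplitude_pos (hσ : 0 < σ) (h : c ^ 2 < 4 * ω) :
    0 < (σ + 1) * (4 * ω - c ^ 2) / (2 * √ω) := by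
  have : 0 < 4 * ω - c ^ 2 := by linarith
  have : 0 < √ω := sqrt_pos.mpr (by nlinarith [sq_nonneg c])
  positivity

lemma solProfile_pos (hσ : 0 < σ) (h : c ^ 2 < 4 * ω) (y : ℝ) : 0 < φ y := by
  rw [solProfile_eq_coshProfile]
  exact coshProfile_pos (solAmplitude_pos hσ h) (div_two_sqrt_lt_one h) y

lemma hasDerivAt_solProfile (hσ : 0 < σ) (h : c ^ 2 < 4 * ω) (y : ℝ) :
    HasDerivAt φ (deriv φ y) y := by
  rw [solProfile_eq_coshProfile]
  exact (hasDerivAt_coshProfile (solAmplitude_pos hσ h) (div_two_sqrt_lt_one h) y)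
    |>.differentiableAt.hasDerivAt

lemma solProfile_rpow_two_mul (hσ : 0 < σ) (h : c ^ 2 < 4 * ω) (y : ℝ) :
    φ y ^ (2 * σ) = (σ + 1) * (4 * ω - c ^ 2) / (2 * √ω) /
      (cosh (σ * √(4 * ω - c ^ 2) * y) - c / (2 * √ω)) := by
  rw [solProfile_eq_coshProfile, coshProfile, one_div]
  exact rpow_inv_rpow (div_pos (solAmplitude_pos hσ h)
    (cosh_sub_pos (div_two_sqrt_lt_one h) _)).le (by positivity)

lemma hasDerivAt_deriv_solProfile (hσ : 0 < σ) (h : c ^ 2 < 4 * ω) (y : ℝ) :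
    HasDerivAt (deriv φ) (profileCoeff σ ω c (φ y ^ (2 * σ)) * φ y) y := by
  have hω : 0 < ω := by nlinarith [sq_nonneg c]
  have hu := cosh_sub_pos (div_two_sqrt_lt_one h) (σ * √(4 * ω - c ^ 2) * y)
  rw [solProfile_rpow_two_mul hσ h, solProfile_eq_coshProfile]
  refine (hasDerivAt_deriv_coshProfile (solAmplitude_pos hσ h) (div_two_sqrt_lt_one h) y)
    |>.congr_deriv (congrArg (· * _) ?_)
  generalize cosh (σ * √(4 * ω - c ^ 2) * y) = C at hu ⊢
  have hu' : 2 * √ω * C - c ≠ 0 := by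
    rw [sub_pos, div_lt_iff₀ (by positivity)] at hu
    linarith
  rw [profileCoeff]
  field_simp
  rw [sq_sqrt hω.le, sq_sqrt (by linarith)]
  ring

lemma hasDerivAt_solProfile_rpow (hσ : 0 < σ) (h : c ^ 2 < 4 * ω) (y : ℝ) :
    HasDerivAt (fun y => φ y ^ (2 * σ)) (2 * σ * (φ y ^ (2 * σ) / φ y) * deriv φ y) y := by
  have hφ := solProfile_pos hσ h y
  refine ((hasDerivAt_solProfile hσ h y).rpow_const (Or.inl hφ.ne')).congr_deriv ?_
  rw [rpow_sub_one hφ.ne']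
  ring

lemma deriv_deriv_solProfile (hσ : 0 < σ) (h : c ^ 2 < 4 * ω) :
    deriv (deriv φ) = fun y => profileCoeff σ ω c (φ y ^ (2 * σ)) * φ y :=
  funext fun y => (hasDerivAt_deriv_solProfile hσ h y).deriv

lemma hasDerivAt_deriv_deriv_solProfile (hσ : 0 < σ) (h : c ^ 2 < 4 * ω) (y : ℝ) :
    HasDerivAt (deriv (deriv φ))
      ((profileCoeff σ ω c (φ y ^ (2 * σ)) + 2 * σ * φ y ^ (2 * σ) *
          (c / 2 - 2 * ((2 * σ + 1) / (4 * (σ + 1) ^ 2)) * φ y ^ (2 * σ))) * deriv φ y) y := by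
  rw [deriv_deriv_solProfile hσ h]
  refine (((hasDerivAt_profileCoeff σ ω c _).comp y (hasDerivAt_solProfile_rpow hσ h y)).mul
    (hasDerivAt_solProfile hσ h y)).congr_deriv ?_
  have hφ := (solProfile_pos hσ h y).ne'
  simp only [Function.comp_apply]
  field_simp
  ring

lemma deriv_chi1Im (hσ : 0 < σ) (h : c ^ 2 < 4 * ω) (k₂ : ℝ) :
    deriv (chi1Im σ ω c k₂) =
      fun y => (k₂ - (2 * σ + 1) / (2 * σ + 2) * φ y ^ (2 * σ)) * deriv φ y := by
  funext y
  refine ((((hasDerivAt_solProfile_rpow hσ h y).div_const (2 * σ + 2)).const_sub k₂).mul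
    (hasDerivAt_solProfile hσ h y)).deriv.trans ?_
  have hφ := (solProfile_pos hσ h y).ne'
  have : 2 * σ + 2 ≠ 0 := by positivity
  field_simp
  ring

lemma hasDerivAt_deriv_chi1Im (hσ : 0 < σ) (h : c ^ 2 < 4 * ω) (k₂ y : ℝ) :
    HasDerivAt (deriv (chi1Im σ ω c k₂))
      ((k₂ - (2 * σ + 1) / (2 * σ + 2) * φ y ^ (2 * σ)) * profileCoeff σ ω c (φ y ^ (2 * σ)) * φ y
        - (2 * σ + 1) / (2 * σ + 2) * (2 * σ * (φ y ^ (2 * σ) / φ y)) * deriv φ y ^ 2) y := by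
  rw [deriv_chi1Im hσ h]
  refine ((((hasDerivAt_solProfile_rpow hσ h y).const_mul
    ((2 * σ + 1) / (2 * σ + 2))).const_sub k₂).mul (hasDerivAt_deriv_solProfile hσ h y)).congr_deriv ?_
  ring

lemma opL11_add_opL21_chi1Im (hσ : 0 < σ) (h : c ^ 2 < 4 * ω) (k₂ y : ℝ) :
    opL11 σ ω c (deriv φ) y + opL21 σ ω c (chi1Im σ ω c k₂) y = 0 := by
  have hφ := solProfile_pos hσ h y
  rw [opL11, opL21, (hasDerivAt_deriv_deriv_solProfile hσ h y).deriv, deriv_chi1Im hσ h,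
    rpow_sub_one hφ.ne', rpow_four_mul_eq_sq hφ.le]
  simp only [chi1Im, profileCoeff]
  field_simp
  ring

lemma opL12_add_opL22_chi1Im (hσ : 0 < σ) (h : c ^ 2 < 4 * ω) (k₂ y : ℝ) :
    opL12 σ ω c (deriv φ) y + opL22 σ ω c (chi1Im σ ω c k₂) y = 0 := by
  have hφ := solProfile_pos hσ h y
  rw [opL12, opL22, deriv_deriv_solProfile hσ h, (hasDerivAt_deriv_chi1Im hσ h k₂ y).deriv,
    rpow_sub_one hφ.ne', rpow_four_mul_eq_sq hφ.le]
  simp only [chi1Im, profileCoeff]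
  field_simp
  ring

end solProfile

theorem chi1_in_kernel (σ ω c : ℝ) (hσ : 0 < σ) (h : c ^ 2 < 4 * ω) (k₂ : ℝ) :
    (∀ y : ℝ,
        opL11 σ ω c (deriv (solProfile σ ω c)) y
          + opL21 σ ω c
              (fun s => (k₂ - solProfile σ ω c s ^ (2 * σ) / (2 * σ + 2)) * solProfile σ ω c s)
              y = 0) ∧
    (∀ y : ℝ,
        opL12 σ ω c (deriv (solProfile σ ω c)) y
          + opL22 σ ω c
              (fun s => (k₂ - solProfile σ ω c s ^ (2 * σ) / (2 * σ + 2)) * solProfile σ ω c s)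
              y = 0) ∧
    (∀ y : ℝ,
        opHde σ ω c (deriv (solProfile σ ω c))
            (fun s => (k₂ - solProfile σ ω c s ^ (2 * σ) / (2 * σ + 2)) * solProfile σ ω c s)
            y = 0) := by
  have hRe := opL11_add_opL21_chi1Im hσ h k₂
  have hIm := opL12_add_opL22_chi1Im hσ h k₂
  exact ⟨hRe, hIm, fun y => opHde_eq_zero (hRe y) (hIm y)⟩
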